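/- arXiv:1709.06193 — 8 statements merged into one kernel-verified Lean document; each statement's English description precedes it below -/
import Mathlib

section
/- Let θ : ℝ → ℝⁿ solve the Kuramoto dynamics θ̇_i = ω_i + Σ_j a_{ij} sin(θ_j − θ_i). Suppose a partition P = {P_1,…,P_m} of {1,…,n} satisfies: (i) for all clusters z ≠ ℓ and all i,j ∈ P_ℓ, Σ_{k∈P_z} a_{ik} = Σ_{k∈P_z} a_{jk}, and (ii) ω_i = ω_j for all i,j in the same cluster. Then whenever the phases are cluster-synchronized at some time t (θ_i(t) = θ_j(t) for all i,j in the same cluster), the velocities agree within each cluster: θ̇_i(t) = θ̇_j(t) for all i,j in the same cluster. -/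
open Finset Real

/-- If (i) inter-cluster row-sums agree within clusters and (ii) natural
frequencies agree within clusters, then whenever the phases are cluster-synchronized at
time `t`, the Kuramoto velocities agree within each cluster. -/
theorem kuramoto_cluster_sync_velocities
    (n m : ℕ) (a : Fin n → Fin n → ℝ) (ω : Fin n → ℝ)
    (cl : Fin n → Fin m)  -- cluster assignment: node `i` belongs to cluster `cl i`
    (θ : ℝ → Fin n → ℝ) (θ' : ℝ → Fin n → ℝ)
    (hdyn : ∀ t i, θ' t i = ω i + ∑ j, a i j * Real.sin (θ t j - θ t i))
    (hweights : ∀ z ℓ : Fin m, z ≠ ℓ → ∀ i j : Fin n, cl i = ℓ → cl j = ℓ →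
      ∑ k ∈ univ.filter (fun k => cl k = z), a i k =
      ∑ k ∈ univ.filter (fun k => cl k = z), a j k)
    (hfreq : ∀ i j : Fin n, cl i = cl j → ω i = ω j)
    (t : ℝ)
    (hsync : ∀ i j : Fin n, cl i = cl j → θ t i = θ t j) :
    ∀ i j : Fin n, cl i = cl j → θ' t i = θ' t j := by
  intro i j hij
  have hθ : θ t i = θ t j := hsync i j hij
  rw [hdyn, hdyn, hfreq i j hij]
  congr 1
  rw [← Finset.sum_fiberwise univ cl (fun k => a i k * Real.sin (θ t k - θ t i)),
      ← Finset.sum_fiberwise univ cl (fun k => a j k * Real.sin (θ t k - θ t j))]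
  refine Finset.sum_congr rfl fun z _ => ?_
  by_cases hz : z = cl i
  · subst hz
    rw [Finset.sum_eq_zero, Finset.sum_eq_zero]
    · intro k hk
      simp only [Finset.mem_filter] at hk
      rw [hsync k j (hk.2.trans hij), sub_self, Real.sin_zero, mul_zero]
    · intro k hk
      simp only [Finset.mem_filter] at hk
      rw [hsync k i hk.2, sub_self, Real.sin_zero, mul_zero]
  · rcases (univ.filter (fun k => cl k = z)).eq_empty_or_nonempty with h | ⟨k0, hk0⟩
    · simp [h]
    · simp only [Finset.mem_filter] at hk0
      have h1 : ∀ k ∈ univ.filter (fun k => cl k = z),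
          a i k * Real.sin (θ t k - θ t i) = a i k * Real.sin (θ t k0 - θ t i) := by
        intro k hk
        simp only [Finset.mem_filter] at hk
        rw [hsync k k0 (hk.2.trans hk0.2.symm)]
      have h2 : ∀ k ∈ univ.filter (fun k => cl k = z),
          a j k * Real.sin (θ t k - θ t j) = a j k * Real.sin (θ t k0 - θ t i) := by
        intro k hk
        simp only [Finset.mem_filter] at hk
        rw [hsync k k0 (hk.2.trans hk0.2.symm), hθ]
      rw [Finset.sum_congr rfl h1, Finset.sum_congr rfl h2,
        ← Finset.sum_mul, ← Finset.sum_mul,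
        hweights z (cl i) hz i j rfl hij.symm]
end

section
/- Consider the vector field f : ℝⁿ → ℝⁿ given by f(θ)_i = ω_i + Σ_j a_{ij} sin(θ_j − θ_i). If the weights satisfy Σ_{k∈P_z}(a_{ik} − a_{jk}) = 0 for all i,j ∈ P_ℓ and all z ≠ ℓ, and ω is constant within each cluster, then the subspace Im(V_P) spanned by the indicator vectors of the clusters is invariant under f, i.e., θ ∈ Im(V_P) implies f(θ) ∈ Im(V_P). -/
open Finset Real

lemma const_mem_span {n m : ℕ} (cl : Fin n → Fin m) (v : Fin n → ℝ)
    (hconst : ∀ i j, cl i = cl j → v i = v j) :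
    v ∈ Submodule.span ℝ
      (Set.range (fun z : Fin m => fun i : Fin n => if cl i = z then (1 : ℝ) else 0)) := by
  classical
  set h : Fin m → ℝ := fun z =>
    if hz : ∃ i, cl i = z then v hz.choose else 0 with hh
  have hv : v = ∑ z : Fin m, h z • (fun i : Fin n => if cl i = z then (1 : ℝ) else 0) := by
    funext i
    have : (∑ z : Fin m, h z • (fun i : Fin n => if cl i = z then (1 : ℝ) else 0)) i
        = ∑ z : Fin m, h z * (if cl i = z then (1 : ℝ) else 0) := by
      simp [Finset.sum_apply]
    rw [this]
    rw [Finset.sum_eq_single (cl i)]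
    · have hz : ∃ j, cl j = cl i := ⟨i, rfl⟩
      have := hconst hz.choose i (hz.choose_spec)
      simp [hh, hz, this]
    · intro b _ hb
      simp [Ne.symm hb]
    · simp
  rw [hv]
  exact Submodule.sum_mem _ fun z _ =>
    Submodule.smul_mem _ _ (Submodule.subset_span ⟨z, rfl⟩)

lemma span_const {n m : ℕ} (cl : Fin n → Fin m) (v : Fin n → ℝ)
    (hv : v ∈ Submodule.span ℝ
      (Set.range (fun z : Fin m => fun i : Fin n => if cl i = z then (1 : ℝ) else 0))) :
    ∀ i j, cl i = cl j → v i = v j := by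
  induction hv using Submodule.span_induction with
  | mem x hx =>
    obtain ⟨z, rfl⟩ := hx
    intro i j hij; simp [hij]
  | zero => intro i j _; rfl
  | add x y _ _ hx hy => intro i j hij; simp [hx i j hij, hy i j hij]
  | smul c x _ hx => intro i j hij; simp [hx i j hij]

/-- Under the weight condition and cluster-constant natural frequencies,
the cluster-synchronization subspace `Im(V_P)` (the span of the indicator vectors of the
clusters) is invariant under the Kuramoto vector field. -/
theorem kuramoto_invariant_subspace
    (n m : ℕ) (a : Fin n → Fin n → ℝ) (ω : Fin n → ℝ)
    (cl : Fin n → Fin m)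
    (f : (Fin n → ℝ) → (Fin n → ℝ))
    (hf : ∀ θ i, f θ i = ω i + ∑ j, a i j * Real.sin (θ j - θ i))
    (hweights : ∀ z ℓ : Fin m, z ≠ ℓ → ∀ i j : Fin n, cl i = ℓ → cl j = ℓ →
      ∑ k ∈ univ.filter (fun k => cl k = z), (a i k - a j k) = 0)
    (hfreq : ∀ i j : Fin n, cl i = cl j → ω i = ω j)
    (θ : Fin n → ℝ)
    (hθ : θ ∈ Submodule.span ℝ
      (Set.range (fun z : Fin m => fun i : Fin n => if cl i = z then (1 : ℝ) else 0))) :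
    f θ ∈ Submodule.span ℝ
      (Set.range (fun z : Fin m => fun i : Fin n => if cl i = z then (1 : ℝ) else 0)) := by
  classical
  have hc := span_const cl θ hθ
  apply const_mem_span
  intro i j hij
  rw [hf, hf]
  have hθij : θ i = θ j := hc i j hij
  have hωij : ω i = ω j := hfreq i j hij
  rw [hωij, hθij]
  congr 1
  have hsplit : ∀ (b : Fin n),
      ∑ k : Fin n, a b k * Real.sin (θ k - θ j)
        = ∑ z : Fin m, ∑ k ∈ univ.filter (fun k => cl k = z),
            a b k * Real.sin (θ k - θ j) := by
    intro b
    rw [← Finset.sum_fiberwise univ cl (fun k => a b k * Real.sin (θ k - θ j))]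
  rw [hsplit i, hsplit j]
  apply Finset.sum_congr rfl
  intro z _
  by_cases hz : z = cl j
  · subst hz
    apply Finset.sum_congr rfl
    intro k hk
    simp only [Finset.mem_filter] at hk
    rw [hc k j hk.2]
    simp
  · rcases Finset.eq_empty_or_nonempty (univ.filter (fun k => cl k = z)) with he | ⟨k₀, hk₀⟩
    · simp [he]
    · simp only [Finset.mem_filter] at hk₀
      have hsin : ∀ k ∈ univ.filter (fun k => cl k = z),
          Real.sin (θ k - θ j) = Real.sin (θ k₀ - θ j) := by
        intro k hk
        simp only [Finset.mem_filter] at hk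
        rw [hc k k₀ (hk.2.trans hk₀.2.symm)]
      have h1 : ∑ k ∈ univ.filter (fun k => cl k = z), a i k * Real.sin (θ k - θ j)
          = (∑ k ∈ univ.filter (fun k => cl k = z), a i k) * Real.sin (θ k₀ - θ j) := by
        rw [Finset.sum_mul]
        exact Finset.sum_congr rfl fun k hk => by rw [hsin k hk]
      have h2 : ∑ k ∈ univ.filter (fun k => cl k = z), a j k * Real.sin (θ k - θ j)
          = (∑ k ∈ univ.filter (fun k => cl k = z), a j k) * Real.sin (θ k₀ - θ j) := by
        rw [Finset.sum_mul]
        exact Finset.sum_congr rfl fun k hk => by rw [hsin k hk]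
      rw [h1, h2]
      have hw := hweights z (cl j) (fun h => hz h) i j hij rfl
      rw [Finset.sum_sub_distrib, sub_eq_zero] at hw
      rw [hw]
end

section
/- Suppose the Kuramoto network with partition P satisfies the weight condition Σ_{k∈P_z}(a_{ik} − a_{jk}) = 0 for all i,j in a common cluster and all other clusters z, and suppose a solution θ is phase-synchronized at some time t (θ is constant on each cluster and θ̇ is constant on each cluster at t). Then the natural frequencies must be equal within each cluster: ω_i = ω_j for all i,j in the same cluster. -/
open Finset Real

/-- Under the weight condition, if a Kuramoto solution is phase-synchronized
at some time `t` (phases and velocities constant on clusters), then the natural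
frequencies must be equal within each cluster. -/
theorem kuramoto_freq_necessity
    (n m : ℕ) (a : Fin n → Fin n → ℝ) (ω : Fin n → ℝ)
    (cl : Fin n → Fin m)
    (θ : ℝ → Fin n → ℝ) (θ' : ℝ → Fin n → ℝ)
    (hdyn : ∀ t i, θ' t i = ω i + ∑ j, a i j * Real.sin (θ t j - θ t i))
    (hweights : ∀ z ℓ : Fin m, z ≠ ℓ → ∀ i j : Fin n, cl i = ℓ → cl j = ℓ →
      ∑ k ∈ univ.filter (fun k => cl k = z), (a i k - a j k) = 0)
    (t : ℝ)
    (hsync : ∀ i j : Fin n, cl i = cl j → θ t i = θ t j)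
    (hsync' : ∀ i j : Fin n, cl i = cl j → θ' t i = θ' t j) :
    ∀ i j : Fin n, cl i = cl j → ω i = ω j := by
  intro i j hij
  have hθ : θ t i = θ t j := hsync i j hij
  have hS : ∑ k, (a i k - a j k) * Real.sin (θ t k - θ t i) = 0 := by
    rw [← Finset.sum_fiberwise univ cl
      (fun k => (a i k - a j k) * Real.sin (θ t k - θ t i))]
    apply Finset.sum_eq_zero
    intro z _
    by_cases hz : z = cl i
    · apply Finset.sum_eq_zero
      intro k hk
      simp only [mem_filter] at hk
      have : θ t k = θ t i := hsync k i (hk.2.trans hz)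
      simp [this]
    · rcases Finset.eq_empty_or_nonempty (univ.filter (fun k => cl k = z)) with he | ⟨k0, hk0⟩
      · simp [he]
      · simp only [mem_filter] at hk0
        have hconst : ∀ k ∈ univ.filter (fun k => cl k = z),
            (a i k - a j k) * Real.sin (θ t k - θ t i)
              = (a i k - a j k) * Real.sin (θ t k0 - θ t i) := by
          intro k hk
          simp only [mem_filter] at hk
          rw [hsync k k0 (hk.2.trans hk0.2.symm)]
        rw [Finset.sum_congr rfl hconst, ← Finset.sum_mul,
          hweights z (cl i) hz i j rfl hij.symm, zero_mul]
  have h1 := hdyn t i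
  have h2 := hdyn t j
  have h3 := hsync' i j hij
  have hexp : ∑ k, (a i k - a j k) * Real.sin (θ t k - θ t i)
      = (∑ k, a i k * Real.sin (θ t k - θ t i))
        - ∑ k, a j k * Real.sin (θ t k - θ t j) := by
    rw [← Finset.sum_sub_distrib]
    apply Finset.sum_congr rfl
    intro k _
    rw [hθ]; ring
  rw [hexp] at hS
  rw [h1, h2] at h3
  linarith
end

section
/- Let V̄_P ∈ ℝ^{n×(n−m)} be any matrix whose columns span the orthogonal complement of Im(V_P). Then the condition V̄_Pᵀ Ā V_P = 0 holds if and only if for every pair of distinct clusters z ≠ ℓ and every i,j ∈ P_z, Σ_{k∈P_ℓ}(a_{ik} − a_{jk}) = 0. -/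
/-!
Since `Im(V̄_P) = Im(V_P)ᗮ`, the equation `V̄_Pᵀ M = 0` says that every column of `M = Ā V_P` lies
in `Im(V_P)ᗮᗮ = Im(V_P)`, the space of vectors that are constant on each cluster. Entry `(i, ℓ)` of
`Ā V_P` is `0` for `i ∈ P_ℓ` and `∑_{k ∈ P_ℓ} a_{ik}` otherwise, so constancy of column `ℓ` on a
cluster `P_z ≠ P_ℓ` is exactly the stated weight condition.

The characteristic matrix `V_P` of the partition into the fibres of `cl` is written
`(1 : Matrix κ κ R).submatrix cl id`.
-/

open Finset Matrix

open Set Submodule in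
theorem WithLp.toLp_mem_span_range_toLp_iff {p : ENNReal} {R V ι : Type*} [Semiring R]
    [AddCommGroup V] [Module R V] (f : ι → V) (x : V) :
    toLp p x ∈ span R (range fun j => toLp p (f j)) ↔ x ∈ span R (range f) := by
  have : (range fun j => toLp p (f j)) = (WithLp.linearEquiv p R V).symm '' range f := by
    rw [← range_comp]; rfl
  rw [this, span_image_linearEquiv, Submodule.mem_map_equiv]
  rfl

theorem Submodule.mem_orthogonal_span_iff {𝕜 E : Type*} [RCLike 𝕜] [NormedAddCommGroup E]
    [InnerProductSpace 𝕜 E] (s : Set E) (x : E) :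
    x ∈ (span 𝕜 s)ᗮ ↔ ∀ u ∈ s, inner 𝕜 u x = 0 := by
  rw [← span_singleton_le_iff_mem, ← isOrtho_iff_le, isOrtho_comm, isOrtho_span]
  simp

namespace Matrix

variable {ι κ μ R : Type*}

open Submodule in
theorem conjTranspose_mul_eq_zero_iff_forall_col_mem_orthogonal {𝕜 : Type*} [RCLike 𝕜]
    [Fintype ι] {B : Matrix ι κ 𝕜} {M : Matrix ι μ 𝕜} :
    Bᴴ * M = 0 ↔
      ∀ ℓ, WithLp.toLp 2 (M.col ℓ) ∈ (span 𝕜 (Set.range fun w => WithLp.toLp 2 (B.col w)))ᗮ := by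
  simp only [mem_orthogonal_span_iff, Set.forall_mem_range, EuclideanSpace.inner_toLp_toLp]
  rw [forall_comm, ← Matrix.ext_iff]
  refine forall₂_congr fun w ℓ => ?_
  simp only [mul_apply, dotProduct, col_apply, conjTranspose_apply, zero_apply, Pi.star_apply,
    mul_comm]

variable [DecidableEq κ] (cl : ι → κ)

theorem submatrix_one_mulVec [Fintype κ] [NonAssocSemiring R] (y : κ → R) :
    (1 : Matrix κ κ R).submatrix cl id *ᵥ y = y ∘ cl :=
  funext fun i => congrFun (one_mulVec y) (cl i)

theorem mem_span_range_col_submatrix_one_iff [Fintype κ] [CommSemiring R] (x : ι → R) :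
    x ∈ Submodule.span R (Set.range ((1 : Matrix κ κ R).submatrix cl id).col) ↔
      x.FactorsThrough cl := by
  rw [← range_mulVecLin]
  constructor
  · rintro ⟨y, rfl⟩ i j h
    simp [submatrix_one_mulVec, h]
  · intro h
    exact ⟨Function.extend cl x 0, funext fun i => by simp [submatrix_one_mulVec, h.extend_apply]⟩

theorem submatrix_one_mul_transpose [Fintype κ] [NonAssocSemiring R] :
    (1 : Matrix κ κ R).submatrix cl id * ((1 : Matrix κ κ R).submatrix cl id)ᵀ =
      (1 : Matrix κ κ R).submatrix cl cl := by
  rw [transpose_submatrix, transpose_one, ← submatrix_mul _ _ _ _ _ Function.bijective_id, mul_one]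

theorem mul_submatrix_one_apply [Fintype ι] [NonAssocSemiring R] (A : Matrix μ ι R) (i : μ)
    (ℓ : κ) :
    (A * (1 : Matrix κ κ R).submatrix cl id) i ℓ = ∑ k ∈ univ.filter (cl · = ℓ), A i k := by
  simp [mul_apply, one_apply, Finset.sum_filter]

theorem sub_hadamard_submatrix_one [NonAssocRing R] (A : Matrix ι ι R) :
    A - A ⊙ (1 : Matrix κ κ R).submatrix cl cl = of fun i k => if cl i = cl k then 0 else A i k := by
  ext i k
  by_cases h : cl i = cl k <;> simp [h, one_apply]

theorem sub_hadamard_mul_submatrix_one_apply [Fintype ι] [NonAssocRing R] (A : Matrix ι ι R)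
    (i : ι) (ℓ : κ) :
    ((A - A ⊙ (1 : Matrix κ κ R).submatrix cl cl) * (1 : Matrix κ κ R).submatrix cl id) i ℓ =
      if cl i = ℓ then 0 else ∑ k ∈ univ.filter (cl · = ℓ), A i k := by
  rw [sub_hadamard_submatrix_one, mul_submatrix_one_apply]
  split_ifs with h
  · exact sum_eq_zero fun k hk => if_pos (h.trans (mem_filter.1 hk).2.symm)
  · exact sum_congr rfl fun k hk => if_neg fun h' => h (h'.trans (mem_filter.1 hk).2)

end Matrix

/-- If the columns of `V̄_P` span `Im(V_P)ᗮ`, then `V̄_Pᵀ Ā V_P = 0` iff the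
weight condition holds: for all distinct clusters `z ≠ ℓ` and `i, j ∈ P_z`,
`∑_{k ∈ P_ℓ} (a i k - a j k) = 0`. -/
theorem matrix_condition_for_synchronization
    (n m : ℕ) (A : Matrix (Fin n) (Fin n) ℝ)
    (cl : Fin n → Fin m)
    (V : Matrix (Fin n) (Fin m) ℝ)
    (hV : ∀ i z, V i z = if cl i = z then (1 : ℝ) else 0)
    (Abar : Matrix (Fin n) (Fin n) ℝ)
    (hAbar : Abar = A - A.hadamard (V * Vᵀ))
    (Vbar : Matrix (Fin n) (Fin (n - m)) ℝ)
    (hVbar : Submodule.span ℝ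
        (Set.range fun w : Fin (n - m) => ((WithLp.equiv 2 (Fin n → ℝ)).symm fun i => Vbar i w)) =
      (Submodule.span ℝ
        (Set.range fun z : Fin m => ((WithLp.equiv 2 (Fin n → ℝ)).symm fun i => V i z)))ᗮ) :
    Vbarᵀ * Abar * V = 0 ↔
      ∀ z ℓ : Fin m, z ≠ ℓ → ∀ i j : Fin n, cl i = z → cl j = z →
        ∑ k ∈ univ.filter (fun k => cl k = ℓ), (A i k - A j k) = 0 := by
  have hVbar' : Submodule.span ℝ (Set.range fun w => WithLp.toLp 2 (Vbar.col w)) =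
      (Submodule.span ℝ (Set.range fun z => WithLp.toLp 2 (V.col z)))ᗮ := hVbar
  obtain rfl : V = (1 : Matrix (Fin m) (Fin m) ℝ).submatrix cl id := ext hV
  subst hAbar
  rw [← conjTranspose_eq_transpose_of_trivial, Matrix.mul_assoc,
    conjTranspose_mul_eq_zero_iff_forall_col_mem_orthogonal, hVbar', Submodule.orthogonal_orthogonal]
  simp only [WithLp.toLp_mem_span_range_toLp_iff, mem_span_range_col_submatrix_one_iff,
    submatrix_one_mul_transpose, Function.FactorsThrough, col_apply,
    sub_hadamard_mul_submatrix_one_apply, sum_sub_distrib, sub_eq_zero]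
  constructor
  · rintro h z ℓ hzℓ i j rfl hj
    simpa [hzℓ, hj] using h ℓ hj.symm
  · intro h ℓ i j hij
    rw [hij]
    split_ifs with hj
    · rfl
    · exact h (cl j) ℓ hj i j hij rfl
end

section
/- Let V_P have orthonormalized columns (i.e., V_Pᵀ V_P = I_m) and let V̄_P ∈ ℝ^{n×(n−m)} have orthonormal columns spanning Im(V_P)^⊥. Then, among all Δ ∈ ℝ^{n×n} satisfying V̄_Pᵀ(Ā + Δ)V_P = 0, the matrix Δ* = −V̄_P V̄_Pᵀ Ā V_P V_Pᵀ has minimal Frobenius norm, and the constraint set is nonempty. -/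
open Finset Matrix

attribute [local instance] Matrix.frobeniusNormedAddCommGroup

section helpers
variable {p q r : ℕ}

private def fsq (X : Matrix (Fin p) (Fin q) ℝ) : ℝ := ∑ i, ∑ j, (X i j)^2

private lemma fsq_eq_trace (X : Matrix (Fin p) (Fin q) ℝ) :
    fsq X = Matrix.trace (Xᵀ * X) := by
  simp [fsq, Matrix.trace, Matrix.mul_apply, Matrix.diag, sq]
  rw [Finset.sum_comm]

private lemma fsq_nonneg (X : Matrix (Fin p) (Fin q) ℝ) : 0 ≤ fsq X :=
  Finset.sum_nonneg fun _ _ => Finset.sum_nonneg fun _ _ => sq_nonneg _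

private lemma norm_eq_sqrt_fsq (X : Matrix (Fin p) (Fin q) ℝ) :
    ‖X‖ = Real.sqrt (fsq X) := by
  rw [Matrix.frobenius_norm_def, Real.sqrt_eq_rpow, fsq]
  congr 1
  refine Finset.sum_congr rfl fun i _ => Finset.sum_congr rfl fun j _ => ?_
  rw [Real.norm_eq_abs, show (2:ℝ) = ((2:ℕ):ℝ) by norm_num, Real.rpow_natCast, sq_abs]

private lemma fsq_transpose (X : Matrix (Fin p) (Fin q) ℝ) : fsq Xᵀ = fsq X := by
  simp [fsq, Matrix.transpose]
  rw [Finset.sum_comm]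

private lemma fsq_mul_orth (V : Matrix (Fin p) (Fin q) ℝ) (hV : Vᵀ * V = 1)
    (M : Matrix (Fin q) (Fin r) ℝ) : fsq (V * M) = fsq M := by
  rw [fsq_eq_trace, fsq_eq_trace, Matrix.transpose_mul, Matrix.mul_assoc,
    ← Matrix.mul_assoc Vᵀ, hV, Matrix.one_mul]

private lemma fsq_orthT_mul_le (V : Matrix (Fin p) (Fin q) ℝ) (hV : Vᵀ * V = 1)
    (X : Matrix (Fin p) (Fin r) ℝ) : fsq (Vᵀ * X) ≤ fsq X := by
  set Q : Matrix (Fin p) (Fin p) ℝ := 1 - V * Vᵀ with hQ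
  have hQQ : Qᵀ * Q = Q := by
    simp only [hQ, Matrix.transpose_sub, Matrix.transpose_one, Matrix.transpose_mul,
      Matrix.transpose_transpose, Matrix.sub_mul, Matrix.mul_sub, Matrix.one_mul,
      Matrix.mul_one]
    rw [Matrix.mul_assoc, ← Matrix.mul_assoc Vᵀ, hV, Matrix.one_mul]
    abel
  have key : fsq (Q * X) = fsq X - fsq (Vᵀ * X) := by
    rw [fsq_eq_trace, fsq_eq_trace, fsq_eq_trace, Matrix.transpose_mul, Matrix.mul_assoc,
      ← Matrix.mul_assoc Qᵀ, hQQ]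
    rw [hQ, Matrix.sub_mul, Matrix.one_mul, Matrix.mul_sub, Matrix.trace_sub]
    congr 1
    rw [Matrix.transpose_mul, Matrix.transpose_transpose]
    simp only [Matrix.mul_assoc]
  have := fsq_nonneg (Q * X)
  linarith

private lemma fsq_mul_orthT_le (V : Matrix (Fin q) (Fin r) ℝ) (hV : Vᵀ * V = 1)
    (X : Matrix (Fin p) (Fin q) ℝ) : fsq (X * V) ≤ fsq X := by
  have h := fsq_orthT_mul_le V hV Xᵀ
  rwa [← Matrix.transpose_mul, fsq_transpose, fsq_transpose] at h

end helpers

/-- Among all `Δ` with `V̄ᵀ (Ā + Δ) V = 0`, the matrix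
`Δ* = -V̄ V̄ᵀ Ā V Vᵀ` has minimal Frobenius norm, and the constraint set is nonempty. -/
theorem optimal_unconstrained_perturbation
    (n m : ℕ) (Abar : Matrix (Fin n) (Fin n) ℝ)
    (V : Matrix (Fin n) (Fin m) ℝ) (Vbar : Matrix (Fin n) (Fin (n - m)) ℝ)
    (hVo : Vᵀ * V = 1) (hVbaro : Vbarᵀ * Vbar = 1) (hperp : Vbarᵀ * V = 0) :
    (Vbarᵀ * (Abar + (-(Vbar * Vbarᵀ * Abar * V * Vᵀ))) * V = 0) ∧
    (∀ Δ : Matrix (Fin n) (Fin n) ℝ, Vbarᵀ * (Abar + Δ) * V = 0 →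
      ‖-(Vbar * Vbarᵀ * Abar * V * Vᵀ)‖ ≤ ‖Δ‖) := by
  constructor
  · have key : Vbarᵀ * (Vbar * Vbarᵀ * Abar * V * Vᵀ) * V
        = Vbarᵀ * Abar * V := by
      rw [show Vbarᵀ * (Vbar * Vbarᵀ * Abar * V * Vᵀ) * V
          = (Vbarᵀ * Vbar) * (Vbarᵀ * Abar * V) * (Vᵀ * V) by
        simp only [Matrix.mul_assoc], hVbaro, hVo, Matrix.one_mul, Matrix.mul_one]
    rw [Matrix.mul_add, Matrix.add_mul, Matrix.mul_neg, Matrix.neg_mul, key]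
    simp
  · intro Δ hΔ
    have hD : Vbarᵀ * Δ * V = -(Vbarᵀ * Abar * V) := by
      rw [Matrix.mul_add, Matrix.add_mul] at hΔ
      exact eq_neg_of_add_eq_zero_right hΔ
    set M := Vbarᵀ * Abar * V with hM
    have h1 : fsq (-(Vbar * Vbarᵀ * Abar * V * Vᵀ)) = fsq M := by
      have : -(Vbar * Vbarᵀ * Abar * V * Vᵀ) = Vbar * ((-M) * Vᵀ) := by
        simp only [hM, Matrix.neg_mul, Matrix.mul_neg, Matrix.mul_assoc]
      rw [this, fsq_mul_orth Vbar hVbaro, ← fsq_transpose, Matrix.transpose_mul,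
        Matrix.transpose_transpose, fsq_mul_orth V hVo, fsq_transpose, hM]
      simp [fsq]
    have h2 : fsq M ≤ fsq Δ := by
      have e : fsq M = fsq (Vbarᵀ * Δ * V) := by
        rw [hD]; simp [fsq]
      calc fsq M = fsq (Vbarᵀ * Δ * V) := e
        _ ≤ fsq (Vbarᵀ * Δ) := fsq_mul_orthT_le V hVo _
        _ ≤ fsq Δ := fsq_orthT_mul_le Vbar hVbaro _
    rw [norm_eq_sqrt_fsq, norm_eq_sqrt_fsq]
    exact Real.sqrt_le_sqrt (by linarith)
end

section
/- With V_P and V̄_P orthonormal as above, any Δ satisfying V̄_Pᵀ(Ā + Δ)V_P = 0 satisfies ‖Δ‖_F ≥ ‖V̄_Pᵀ Ā V_P‖_F, with equality achieved by Δ* = −V̄_P V̄_Pᵀ Ā V_P V_Pᵀ. -/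
open Matrix

attribute [local instance] Matrix.frobeniusNormedAddCommGroup

private lemma norm_sq_eq_trace {p q : ℕ} (A : Matrix (Fin p) (Fin q) ℝ) :
    ‖A‖ ^ 2 = trace (Aᵀ * A) := by
  rw [Matrix.frobenius_norm_def, ← Real.rpow_natCast _ 2, ← Real.rpow_mul (by positivity)]
  norm_num
  simp only [Matrix.trace, Matrix.mul_apply, Matrix.diag, Matrix.transpose_apply, sq]
  rw [Finset.sum_comm]

private lemma norm_mul_left_eq {p q r : ℕ} (U : Matrix (Fin p) (Fin q) ℝ)
    (hU : Uᵀ * U = 1) (C : Matrix (Fin q) (Fin r) ℝ) : ‖U * C‖ = ‖C‖ := by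
  have h : ‖U * C‖ ^ 2 = ‖C‖ ^ 2 := by
    rw [norm_sq_eq_trace, norm_sq_eq_trace, Matrix.transpose_mul, Matrix.mul_assoc,
      ← Matrix.mul_assoc Uᵀ U C, hU, Matrix.one_mul]
  rw [← Real.sqrt_sq (norm_nonneg (U * C)), h, Real.sqrt_sq (norm_nonneg C)]

private lemma norm_mul_right_eq {p q r : ℕ} (U : Matrix (Fin p) (Fin q) ℝ)
    (hU : Uᵀ * U = 1) (C : Matrix (Fin r) (Fin q) ℝ) : ‖C * Uᵀ‖ = ‖C‖ := by
  rw [← Matrix.frobenius_norm_transpose, Matrix.transpose_mul, Matrix.transpose_transpose,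
    norm_mul_left_eq U hU, Matrix.frobenius_norm_transpose]

private lemma norm_mul_left_le {p q r : ℕ} (U : Matrix (Fin p) (Fin q) ℝ)
    (hU : Uᵀ * U = 1) (C : Matrix (Fin p) (Fin r) ℝ) : ‖Uᵀ * C‖ ≤ ‖C‖ := by
  have hU' : ∀ s (Z : Matrix (Fin q) (Fin s) ℝ), Uᵀ * (U * Z) = Z := by
    intro s Z; rw [← Matrix.mul_assoc, hU, Matrix.one_mul]
  have key : ‖U * (Uᵀ * C)‖ ^ 2 + ‖C - U * (Uᵀ * C)‖ ^ 2 = ‖C‖ ^ 2 := by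
    simp only [norm_sq_eq_trace, Matrix.transpose_sub, Matrix.transpose_mul,
      Matrix.transpose_transpose, Matrix.sub_mul, Matrix.mul_sub, Matrix.trace_sub,
      Matrix.mul_assoc, hU']
    ring
  have h2 : ‖U * (Uᵀ * C)‖ = ‖Uᵀ * C‖ := norm_mul_left_eq U hU _
  rw [h2] at key
  nlinarith [norm_nonneg (Uᵀ * C), norm_nonneg C, sq_nonneg ‖C - U * (Uᵀ * C)‖]

private lemma norm_mul_right_le {p q r : ℕ} (U : Matrix (Fin p) (Fin q) ℝ)
    (hU : Uᵀ * U = 1) (C : Matrix (Fin r) (Fin p) ℝ) : ‖C * U‖ ≤ ‖C‖ := by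
  rw [← Matrix.frobenius_norm_transpose, Matrix.transpose_mul, ← Matrix.frobenius_norm_transpose C]
  exact norm_mul_left_le U hU Cᵀ

/-- Any feasible `Δ` satisfies `‖Δ‖_F ≥ ‖V̄ᵀ Ā V‖_F`, and equality is
achieved by `Δ* = -V̄ V̄ᵀ Ā V Vᵀ`. -/
theorem frobenius_lower_bound_and_equality
    (n m : ℕ) (Abar : Matrix (Fin n) (Fin n) ℝ)
    (V : Matrix (Fin n) (Fin m) ℝ) (Vbar : Matrix (Fin n) (Fin (n - m)) ℝ)
    (hVo : Vᵀ * V = 1) (hVbaro : Vbarᵀ * Vbar = 1) (hperp : Vbarᵀ * V = 0) :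
    (∀ Δ : Matrix (Fin n) (Fin n) ℝ, Vbarᵀ * (Abar + Δ) * V = 0 →
      ‖Vbarᵀ * Abar * V‖ ≤ ‖Δ‖) ∧
    (Vbarᵀ * (Abar + (-(Vbar * Vbarᵀ * Abar * V * Vᵀ))) * V = 0 ∧
      ‖-(Vbar * Vbarᵀ * Abar * V * Vᵀ)‖ = ‖Vbarᵀ * Abar * V‖) := by
  refine ⟨?_, ?_, ?_⟩
  · intro Δ hΔ
    rw [Matrix.mul_add, Matrix.add_mul] at hΔ
    have h : Vbarᵀ * Abar * V = -(Vbarᵀ * Δ * V) :=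
      eq_neg_of_add_eq_zero_left hΔ
    rw [h, norm_neg]
    calc ‖Vbarᵀ * Δ * V‖ ≤ ‖Δ * V‖ := by
          rw [Matrix.mul_assoc]; exact norm_mul_left_le Vbar hVbaro (Δ * V)
      _ ≤ ‖Δ‖ := norm_mul_right_le V hVo Δ
  · have hVbar' : ∀ s (Z : Matrix (Fin (n-m)) (Fin s) ℝ), Vbarᵀ * (Vbar * Z) = Z := by
      intro s Z; rw [← Matrix.mul_assoc, hVbaro, Matrix.one_mul]
    rw [Matrix.mul_add, Matrix.add_mul, Matrix.mul_neg, Matrix.neg_mul]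
    rw [show Vbarᵀ * (Vbar * Vbarᵀ * Abar * V * Vᵀ) * V
        = Vbarᵀ * (Vbar * (Vbarᵀ * Abar * (V * (Vᵀ * V)))) by
      simp only [Matrix.mul_assoc]]
    rw [hVbar', hVo, Matrix.mul_one, Matrix.mul_assoc, add_neg_cancel]
  · rw [norm_neg,
      show Vbar * Vbarᵀ * Abar * V * Vᵀ = Vbar * (Vbarᵀ * Abar * V * Vᵀ) by
        simp only [Matrix.mul_assoc],
      norm_mul_left_eq Vbar hVbaro, norm_mul_right_eq V hVo]
end

section
/- If a trajectory θ of the Kuramoto dynamics satisfies θ(t) ∈ Im(V_P) for all t in an interval, then θ̈_i(t) − θ̈_j(t) = Σ_{z≠ℓ} cos(φ_z(t) − φ_ℓ(t))·(φ̇_z(t) − φ̇_ℓ(t))·Σ_{k∈P_z}(a_{ik} − a_{jk}) = 0 for all i,j ∈ P_ℓ, where φ_z(t) is the common phase of cluster P_z at time t. -/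
open Finset Real Filter Topology

/-!
On the interval every phase `θ k` coincides with its cluster phase `φ (cl k)`, so the
velocity of an oscillator `i` in cluster `ℓ` is both the Kuramoto field at `i` and `φ' ℓ`.
Hence the difference of the fields at `i, j ∈ P_ℓ` vanishes identically, and its derivative
is `0`. Differentiating the same difference after substituting the cluster phases gives
`∑_k (a i k - a j k) cos (φ (cl k) - φ ℓ) (φ' (cl k) - φ' ℓ)`; grouping `k` by cluster yields
the stated sum, in which the cluster `ℓ` itself contributes `cos 0 * 0 = 0`.
-/

noncomputable def kuramotoField {ι : Type*} [Fintype ι] (a : ι → ι → ℝ) (ω : ι → ℝ)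
    (x : ι → ℝ) (i : ι) : ℝ :=
  ω i + ∑ k, a i k * sin (x k - x i)

section ClusterSums

variable {ι κ R : Type*} [Fintype ι] [Fintype κ] [DecidableEq κ] [CommSemiring R]

theorem sum_mul_comp_eq_sum_ne_mul_sum_fiber (cl : ι → κ) (c : ι → R) (g : κ → R) {ℓ : κ}
    (hg : g ℓ = 0) :
    ∑ k, c k * g (cl k) =
      ∑ z ∈ univ.filter (fun z => z ≠ ℓ), g z * ∑ k ∈ univ.filter (fun k => cl k = z), c k := by
  rw [← sum_fiberwise univ cl, sum_filter_of_ne]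
  · refine sum_congr rfl fun z _ => ?_
    rw [mul_sum]
    refine sum_congr rfl fun k hk => ?_
    rw [(mem_filter.mp hk).2, mul_comm]
  · rintro z - hz rfl
    exact hz (by rw [hg, zero_mul])

end ClusterSums

section Kuramoto

variable {ι κ : Type*} [Fintype ι]

theorem hasDerivAt_sum_mul_sin_sub {x : ℝ → ι → ℝ} {x' : ι → ℝ} {y : ℝ → ℝ} {y' t : ℝ}
    (hx : ∀ k, HasDerivAt (fun s => x s k) (x' k) t) (hy : HasDerivAt y y' t) (c : ι → ℝ) :
    HasDerivAt (fun s => ∑ k, c k * sin (x s k - y s))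
      (∑ k, c k * (cos (x t k - y t) * (x' k - y'))) t :=
  HasDerivAt.fun_sum fun k _ => (((hx k).sub hy).sin).const_mul (c k)

theorem kuramotoField_sub_of_sync (a : ι → ι → ℝ) (ω : ι → ℝ) {x : ι → ℝ} {p : κ → ℝ}
    {cl : ι → κ} (hx : ∀ k, x k = p (cl k)) {ℓ : κ} {i j : ι} (hi : cl i = ℓ) (hj : cl j = ℓ) :
    kuramotoField a ω x i - kuramotoField a ω x j =
      ω i - ω j + ∑ k, (a i k - a j k) * sin (p (cl k) - p ℓ) := by
  simp only [kuramotoField, hx, hi, hj, sub_mul, sum_sub_distrib]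
  ring

end Kuramoto

/-- If a Kuramoto trajectory stays in `Im(V_P)` on an interval (phases
constant on clusters, with common cluster phases `φ` and cluster frequencies `φ'`), then
for `i, j` in a common cluster `ℓ`, the second-derivative difference `θ̈ i - θ̈ j` equals
`∑_{z ≠ ℓ} cos (φ z - φ ℓ) (φ' z - φ' ℓ) ∑_{k ∈ P_z} (a i k - a j k)`, and this
quantity is zero. -/
theorem second_derivative_difference
    (n m : ℕ) (a : Fin n → Fin n → ℝ) (ω : Fin n → ℝ)
    (cl : Fin n → Fin m)
    (t1 t2 : ℝ)
    (θ : ℝ → Fin n → ℝ) (φ φ' : ℝ → Fin m → ℝ)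
    (hdyn : ∀ (i : Fin n), ∀ t ∈ Set.Ioo t1 t2,
      HasDerivAt (fun s => θ s i) (ω i + ∑ j, a i j * Real.sin (θ t j - θ t i)) t)
    (hsync : ∀ t ∈ Set.Ioo t1 t2, ∀ i : Fin n, θ t i = φ t (cl i))
    (hφ : ∀ (z : Fin m), ∀ t ∈ Set.Ioo t1 t2,
      HasDerivAt (fun s => φ s z) (φ' t z) t) :
    ∀ t ∈ Set.Ioo t1 t2, ∀ (ℓ : Fin m) (i j : Fin n), cl i = ℓ → cl j = ℓ →
      (HasDerivAt
        (fun s => (ω i + ∑ k, a i k * Real.sin (θ s k - θ s i)) -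
                  (ω j + ∑ k, a j k * Real.sin (θ s k - θ s j)))
        (∑ z ∈ univ.filter (fun z => z ≠ ℓ),
          Real.cos (φ t z - φ t ℓ) * (φ' t z - φ' t ℓ) *
            ∑ k ∈ univ.filter (fun k => cl k = z), (a i k - a j k)) t) ∧
      (∑ z ∈ univ.filter (fun z => z ≠ ℓ),
          Real.cos (φ t z - φ t ℓ) * (φ' t z - φ' t ℓ) *
            ∑ k ∈ univ.filter (fun k => cl k = z), (a i k - a j k)) = 0 := by
  intro t ht ℓ i j hi hj
  have hnhds : ∀ s ∈ Set.Ioo t1 t2, ∀ᶠ u in 𝓝 s, u ∈ Set.Ioo t1 t2 :=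
    fun s hs => isOpen_Ioo.mem_nhds hs
  have hfreq : ∀ s ∈ Set.Ioo t1 t2, ∀ k, kuramotoField a ω (θ s) k = φ' s (cl k) :=
    fun s hs k => (hdyn k s hs).unique <| (hφ (cl k) s hs).congr_of_eventuallyEq <| by
      filter_upwards [hnhds s hs] with u hu using hsync u hu k
  have hzero : HasDerivAt (fun s => kuramotoField a ω (θ s) i - kuramotoField a ω (θ s) j) 0 t :=
    (hasDerivAt_const t 0).congr_of_eventuallyEq <| by
      filter_upwards [hnhds t ht] with s hs
      rw [hfreq s hs i, hfreq s hs j, hi, hj, sub_self]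
  have hderiv : HasDerivAt (fun s => kuramotoField a ω (θ s) i - kuramotoField a ω (θ s) j)
      (∑ z ∈ univ.filter (fun z => z ≠ ℓ), cos (φ t z - φ t ℓ) * (φ' t z - φ' t ℓ) *
        ∑ k ∈ univ.filter (fun k => cl k = z), (a i k - a j k)) t := by
    rw [← sum_mul_comp_eq_sum_ne_mul_sum_fiber cl _
      (fun z => cos (φ t z - φ t ℓ) * (φ' t z - φ' t ℓ)) (by simp)]
    refine ((hasDerivAt_sum_mul_sin_sub (fun k => hφ (cl k) t ht) (hφ ℓ t ht) _).const_add
      (ω i - ω j)).congr_of_eventuallyEq ?_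
    filter_upwards [hnhds t ht] with s hs
    exact kuramotoField_sub_of_sync a ω (hsync s hs) hi hj
  exact ⟨hderiv, hderiv.unique hzero⟩
end

section
/- Suppose the weight condition Σ_{k∈P_z}(a_{ik} − a_{jk}) = 0 holds for all clusters z ≠ ℓ and i,j ∈ P_ℓ, and ω is constant on clusters with common values ω̂ ∈ ℝ^m. Define the reduced Kuramoto system on ℝ^m by φ̇_z = ω̂_z + Σ_{w≠z} b_{zw} sin(φ_w − φ_z), where b_{zw} = Σ_{k∈P_w} a_{ik} for any fixed i ∈ P_z (well-defined by the weight condition). Then θ(t) := V_P φ(t) solves the full n-dimensional Kuramoto dynamics whenever φ solves the reduced m-dimensional dynamics. -/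
open Finset Real

/-- Under the weight condition and cluster-constant frequencies `ω̂`, if `φ`
solves the reduced `m`-dimensional Kuramoto dynamics with coupling
`b z w = ∑_{k ∈ P_w} a (s z) k` (where `s z` is any representative of cluster `z`), then
`θ t = V_P (φ t)`, i.e. `θ t i = φ t (cl i)`, solves the full `n`-dimensional dynamics. -/
theorem reduced_dynamics_lift
    (n m : ℕ) (a : Fin n → Fin n → ℝ) (ω : Fin n → ℝ)
    (cl : Fin n → Fin m) (s : Fin m → Fin n) (hs : ∀ z, cl (s z) = z)
    (ωhat : Fin m → ℝ) (hω : ∀ i, ω i = ωhat (cl i))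
    (hweights : ∀ z ℓ : Fin m, z ≠ ℓ → ∀ i j : Fin n, cl i = ℓ → cl j = ℓ →
      ∑ k ∈ univ.filter (fun k => cl k = z), (a i k - a j k) = 0)
    (b : Fin m → Fin m → ℝ)
    (hb : ∀ z w, b z w = ∑ k ∈ univ.filter (fun k => cl k = w), a (s z) k)
    (φ : ℝ → Fin m → ℝ)
    (hφ : ∀ (z : Fin m) (t : ℝ),
      HasDerivAt (fun τ => φ τ z)
        (ωhat z + ∑ w ∈ univ.filter (fun w => w ≠ z), b z w * Real.sin (φ t w - φ t z)) t) :
    ∀ (i : Fin n) (t : ℝ),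
      HasDerivAt (fun τ => φ τ (cl i))
        (ω i + ∑ j, a i j * Real.sin (φ t (cl j) - φ t (cl i))) t := by
  intro i t
  have key : ω i + ∑ j, a i j * Real.sin (φ t (cl j) - φ t (cl i))
      = ωhat (cl i) + ∑ w ∈ univ.filter (fun w => w ≠ cl i),
          b (cl i) w * Real.sin (φ t w - φ t (cl i)) := by
    rw [hω i]
    congr 1
    -- group the sum by clusters
    rw [← Finset.sum_fiberwise (univ : Finset (Fin n)) cl
        (fun j => a i j * Real.sin (φ t (cl j) - φ t (cl i)))]
    rw [← Finset.sum_filter_add_sum_filter_not (univ : Finset (Fin m)) (fun w => w ≠ cl i)]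
    have h2 : ∑ w ∈ univ.filter (fun w => ¬ w ≠ cl i),
        ∑ j ∈ univ.filter (fun j => cl j = w),
          a i j * Real.sin (φ t (cl j) - φ t (cl i)) = 0 := by
      apply Finset.sum_eq_zero
      intro w hw
      simp only [mem_filter, not_not] at hw
      apply Finset.sum_eq_zero
      intro j hj
      simp only [mem_filter] at hj
      rw [hj.2, hw.2, sub_self, Real.sin_zero, mul_zero]
    rw [h2, add_zero]
    apply Finset.sum_congr rfl
    intro w hw
    simp only [mem_filter, mem_univ, true_and] at hw
    have hsum : ∀ j ∈ univ.filter (fun j => cl j = w),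
        a i j * Real.sin (φ t (cl j) - φ t (cl i))
          = a i j * Real.sin (φ t w - φ t (cl i)) := by
      intro j hj
      simp only [mem_filter] at hj
      rw [hj.2]
    rw [Finset.sum_congr rfl hsum, ← Finset.sum_mul, hb]
    congr 1
    have := hweights w (cl i) hw i (s (cl i)) rfl (hs (cl i))
    rw [Finset.sum_sub_distrib] at this
    -- this : ∑ a i k - ∑ a (s (cl i)) k = 0
    linarith [this]
  rw [key]
  exact hφ (cl i) t
end
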